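/- arXiv:0807.3489 — 2 statements merged into one kernel-verified Lean document; each statement's English description precedes it below -/
import Mathlib

section
/- Let ρ > 0, Ω0 > 0, α > β > 1, and let u0 be a nonconstant 2πρ-periodic C² solution of ü + f(u)u̇ + g(u) = 0, where f(u) = (ρΩ0)⁻¹(1 − β + 3βu²) and g(u) = (ρΩ0)⁻²((α−β)u + βu³), with u̇0(0) = 0 and ü0(0) ≠ 0. Assume f0 := (2πρ)⁻¹ ∫₀^{2πρ} f(u0(s)) ds > 0. Let w11 be the solution of the linearised equation ẅ + f(u0(τ))ẇ + (f′(u0(τ))u̇0(τ) + g′(u0(τ)))w = 0 with w11(0) = 1 and ẇ11(0) = 0. Then there exist a constant γ ∈ ℝ and a continuous 2πρ-periodic function b : ℝ → ℝ such that w11(τ) = γ u̇0(τ) + e^{−f0 τ} b(τ) for all τ ∈ ℝ. -/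
open Real Function

/-!
Differentiating the equation shows that `u̇0` is a `T`-periodic solution of the variational
equation `ẅ + p ẇ + q w = 0`, `p = f ∘ u0`, `T = 2πρ`. By Abel's formula the Wronskian of
`u̇0` and `w11` is `-ü0(0) e^{-∫₀^τ p}`, which never vanishes, so every solution is a
combination of these two; in particular `w11(τ + T) = A u̇0(τ) + B w11(τ)`. Evaluating the
Wronskian at `τ = T` gives the Floquet multiplier `B = w11(T) = e^{-f0 T} ≠ 1`, and then
`γ = A / (1 - B)` makes `b(τ) = e^{f0 τ} (w11(τ) - γ u̇0(τ))` periodic.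
-/

theorem Function.Periodic.deriv {𝕜 F : Type*} [NontriviallyNormedField 𝕜] [NormedAddCommGroup F]
    [NormedSpace 𝕜 F] {f : 𝕜 → F} {c : 𝕜} (h : Periodic f c) : Periodic (deriv f) c :=
  fun x => by rw [← deriv_comp_add_const, show (fun y => f (y + c)) = f from funext h]

theorem eq_mul_exp_neg_integral_of_hasDerivAt {p W : ℝ → ℝ} (hp : Continuous p)
    (hW : ∀ τ, HasDerivAt W (-p τ * W τ) τ) (τ : ℝ) :
    W τ = W 0 * exp (-∫ s in (0 : ℝ)..τ, p s) := by
  have hconst : ∀ t, HasDerivAt (fun s => W s * exp (∫ r in (0 : ℝ)..s, p r)) 0 t := fun t =>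
    ((hW t).mul (hp.integral_hasStrictDerivAt 0 t).hasDerivAt.exp).congr_deriv (by ring)
  have h := is_const_of_deriv_eq_zero (fun t => (hconst t).differentiableAt)
    (fun t => (hconst t).deriv) τ 0
  simp only [intervalIntegral.integral_same, exp_zero, mul_one] at h
  rw [← h, exp_neg, mul_inv_cancel_right₀ (exp_ne_zero _)]

theorem exists_eq_mul_add_exp_mul_periodic {v w : ℝ → ℝ} {T A c : ℝ} (hv : Continuous v)
    (hw : Continuous w) (hvT : Periodic v T) (hcT : c * T ≠ 0)
    (hwT : ∀ τ, w (τ + T) = A * v τ + exp (-(c * T)) * w τ) :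
    ∃ γ : ℝ, ∃ b : ℝ → ℝ, Continuous b ∧ Periodic b T ∧
      ∀ τ, w τ = γ * v τ + exp (-c * τ) * b τ := by
  have hB : 1 - exp (-(c * T)) ≠ 0 := by
    rw [sub_ne_zero, ne_comm, Ne, exp_eq_one_iff, neg_eq_zero]
    exact hcT
  set γ := A / (1 - exp (-(c * T)))
  have hγ : A = γ * (1 - exp (-(c * T))) := (div_mul_cancel₀ A hB).symm
  refine ⟨γ, fun τ => exp (c * τ) * (w τ - γ * v τ), by fun_prop, fun τ => ?_, fun τ => ?_⟩
  · have hE : exp (c * T) * exp (-(c * T)) = 1 := by rw [← exp_add, add_neg_cancel, exp_zero]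
    simp only [hwT τ, hvT τ, mul_add, exp_add]
    linear_combination exp (c * τ) * (w τ - γ * v τ) * hE + exp (c * τ) * exp (c * T) * v τ * hγ
  · have hE : exp (-c * τ) * exp (c * τ) = 1 := by rw [← exp_add, neg_mul, neg_add_cancel, exp_zero]
    linear_combination -(w τ - γ * v τ) * hE

/-- `w` solves `ẅ + p ẇ + q w = 0`, with `ẇ = w'`. -/
structure IsLinODESol (p q w w' : ℝ → ℝ) : Prop where
  hasDerivAt : ∀ τ, HasDerivAt w (w' τ) τ
  hasDerivAt_deriv : ∀ τ, HasDerivAt w' (-p τ * w' τ - q τ * w τ) τ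

def wronskian (v v' w w' : ℝ → ℝ) (τ : ℝ) : ℝ := v τ * w' τ - v' τ * w τ

namespace IsLinODESol

variable {p q v v' w w' φ φ' : ℝ → ℝ}

theorem of_contDiff_two (hw : ContDiff ℝ 2 w)
    (hode : ∀ τ, deriv (deriv w) τ + p τ * deriv w τ + q τ * w τ = 0) :
    IsLinODESol p q w (deriv w) where
  hasDerivAt τ := (hw.differentiable two_ne_zero τ).hasDerivAt
  hasDerivAt_deriv τ :=
    (hw.differentiable_deriv_two τ).hasDerivAt.congr_deriv (by linarith [hode τ])

theorem deriv_of_lienard {f g f' g' u : ℝ → ℝ} (hf : ∀ x, HasDerivAt f (f' x) x)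
    (hg : ∀ x, HasDerivAt g (g' x) x) (hu : ContDiff ℝ 2 u)
    (hode : ∀ τ, deriv (deriv u) τ + f (u τ) * deriv u τ + g (u τ) = 0) :
    IsLinODESol (fun τ => f (u τ)) (fun τ => f' (u τ) * deriv u τ + g' (u τ))
      (deriv u) (deriv (deriv u)) := by
  have hu' : ∀ τ, HasDerivAt u (deriv u τ) τ :=
    fun τ => (hu.differentiable two_ne_zero τ).hasDerivAt
  have hu'' : ∀ τ, HasDerivAt (deriv u) (deriv (deriv u) τ) τ :=
    fun τ => (hu.differentiable_deriv_two τ).hasDerivAt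
  refine ⟨hu'', fun τ => ?_⟩
  have h := ((((hf (u τ)).comp τ (hu' τ)).mul (hu'' τ)).add ((hg (u τ)).comp τ (hu' τ))).neg
  refine (h.congr_of_eventuallyEq (Filter.Eventually.of_forall fun t => ?_)).congr_deriv ?_
  · simp only [Pi.neg_apply, Pi.add_apply, Pi.mul_apply, comp_apply]
    linarith [hode t]
  · simp only [comp_apply]
    ring

theorem continuous (hw : IsLinODESol p q w w') : Continuous w :=
  continuous_iff_continuousAt.2 fun τ => (hw.hasDerivAt τ).continuousAt

theorem sub (hv : IsLinODESol p q v v') (hw : IsLinODESol p q w w') :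
    IsLinODESol p q (fun τ => v τ - w τ) (fun τ => v' τ - w' τ) where
  hasDerivAt τ := (hv.hasDerivAt τ).sub (hw.hasDerivAt τ)
  hasDerivAt_deriv τ := ((hv.hasDerivAt_deriv τ).sub (hw.hasDerivAt_deriv τ)).congr_deriv (by ring)

theorem const_mul (c : ℝ) (hw : IsLinODESol p q w w') :
    IsLinODESol p q (fun τ => c * w τ) (fun τ => c * w' τ) where
  hasDerivAt τ := (hw.hasDerivAt τ).const_mul c
  hasDerivAt_deriv τ := ((hw.hasDerivAt_deriv τ).const_mul c).congr_deriv (by ring)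

theorem comp_add_const {T : ℝ} (hpT : Periodic p T) (hqT : Periodic q T)
    (hw : IsLinODESol p q w w') :
    IsLinODESol p q (fun τ => w (τ + T)) (fun τ => w' (τ + T)) where
  hasDerivAt τ := (hw.hasDerivAt (τ + T)).comp_add_const τ T
  hasDerivAt_deriv τ := by
    simpa only [hpT τ, hqT τ] using (hw.hasDerivAt_deriv (τ + T)).comp_add_const τ T

theorem hasDerivAt_wronskian (hv : IsLinODESol p q v v') (hw : IsLinODESol p q w w') (τ : ℝ) :
    HasDerivAt (wronskian v v' w w') (-p τ * wronskian v v' w w' τ) τ :=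
  (((hv.hasDerivAt τ).mul (hw.hasDerivAt_deriv τ)).sub
    ((hv.hasDerivAt_deriv τ).mul (hw.hasDerivAt τ))).congr_deriv (by simp only [wronskian]; ring)

theorem wronskian_eq (hp : Continuous p) (hv : IsLinODESol p q v v') (hw : IsLinODESol p q w w')
    (τ : ℝ) : wronskian v v' w w' τ = wronskian v v' w w' 0 * exp (-∫ s in (0 : ℝ)..τ, p s) :=
  eq_mul_exp_neg_integral_of_hasDerivAt hp (hv.hasDerivAt_wronskian hw) τ

theorem eq_zero_of_wronskian_ne_zero (hp : Continuous p) (hv : IsLinODESol p q v v')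
    (hw : IsLinODESol p q w w') (hφ : IsLinODESol p q φ φ') (hW : wronskian v v' w w' 0 ≠ 0)
    (hφ0 : φ 0 = 0) (hφ'0 : φ' 0 = 0) (τ : ℝ) : φ τ = 0 := by
  have hvφ : wronskian v v' φ φ' τ = 0 := by
    rw [hv.wronskian_eq hp hφ, wronskian, hφ0, hφ'0]; ring
  have hwφ : wronskian w w' φ φ' τ = 0 := by
    rw [hw.wronskian_eq hp hφ, wronskian, hφ0, hφ'0]; ring
  have hvw : wronskian v v' w w' τ ≠ 0 := by
    rw [hv.wronskian_eq hp hw]; exact mul_ne_zero hW (exp_ne_zero _)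
  have h : wronskian v v' w w' τ * φ τ = 0 := by
    simp only [wronskian] at hvφ hwφ ⊢
    linear_combination w τ * hvφ - v τ * hwφ
  exact (mul_eq_zero.1 h).resolve_left hvw

theorem eq_add_of_initial (hp : Continuous p) (hv : IsLinODESol p q v v')
    (hw : IsLinODESol p q w w') (hv0 : v 0 = 0) (hv'0 : v' 0 ≠ 0) (hw0 : w 0 = 1)
    (hw'0 : w' 0 = 0) (hφ : IsLinODESol p q φ φ') (τ : ℝ) :
    φ τ = φ' 0 / v' 0 * v τ + φ 0 * w τ := by
  have h := eq_zero_of_wronskian_ne_zero hp hv hw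
    ((hφ.sub (hv.const_mul (φ' 0 / v' 0))).sub (hw.const_mul (φ 0)))
    (by simp only [wronskian, hv0, hw0, hw'0]; simpa using hv'0)
    (by simp only [hv0, hw0]; ring) (by simp only [hw'0]; field_simp; ring) τ
  linarith

theorem apply_period_eq_exp {T : ℝ} (hp : Continuous p) (hv : IsLinODESol p q v v')
    (hvT : Periodic v T) (hv0 : v 0 = 0) (hv'0 : v' 0 ≠ 0) (hw : IsLinODESol p q w w')
    (hw0 : w 0 = 1) (hw'0 : w' 0 = 0) : w T = exp (-∫ s in (0 : ℝ)..T, p s) := by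
  have hv'T : Periodic v' T := by
    rw [show v' = deriv v from funext fun τ => (hv.hasDerivAt τ).deriv.symm]
    exact hvT.deriv
  have h := hv.wronskian_eq hp hw T
  simp only [wronskian, hvT.eq, hv'T.eq, hv0, hw0, hw'0] at h
  exact mul_left_cancel₀ hv'0 (by linear_combination -h)

theorem exists_floquet_decomposition {T : ℝ} (hp : Continuous p) (hpT : Periodic p T)
    (hqT : Periodic q T) (hv : IsLinODESol p q v v') (hvT : Periodic v T) (hv0 : v 0 = 0)
    (hv'0 : v' 0 ≠ 0) (hw : IsLinODESol p q w w') (hw0 : w 0 = 1) (hw'0 : w' 0 = 0)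
    (hpT0 : ∫ s in (0 : ℝ)..T, p s ≠ 0) :
    ∃ γ : ℝ, ∃ b : ℝ → ℝ, Continuous b ∧ Periodic b T ∧
      ∀ τ, w τ = γ * v τ + exp (-(T⁻¹ * ∫ s in (0 : ℝ)..T, p s) * τ) * b τ := by
  have hT : T ≠ 0 := by rintro rfl; simp at hpT0
  have hmean : (T⁻¹ * ∫ s in (0 : ℝ)..T, p s) * T = ∫ s in (0 : ℝ)..T, p s := by field_simp
  refine exists_eq_mul_add_exp_mul_periodic (A := w' T / v' 0) hv.continuous hw.continuous hvT
    (by rwa [hmean]) fun τ => ?_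
  rw [hmean, ← hv.apply_period_eq_exp hp hvT hv0 hv'0 hw hw0 hw'0]
  simpa only [zero_add] using
    eq_add_of_initial hp hv hw hv0 hv'0 hw0 hw'0 (hw.comp_add_const hpT hqT) τ

end IsLinODESol

theorem floquet_decomposition_general
    (ρ Ω0 α β : ℝ)
    (u0 : ℝ → ℝ) (hu0C : ContDiff ℝ 2 u0)
    (hper : Function.Periodic u0 (2 * π * ρ))
    (hode : ∀ τ : ℝ,
      deriv (deriv u0) τ + (ρ * Ω0)⁻¹ * (1 - β + 3 * β * (u0 τ) ^ 2) * deriv u0 τ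
        + ((ρ * Ω0)⁻¹) ^ 2 * ((α - β) * u0 τ + β * (u0 τ) ^ 3) = 0)
    (h1 : deriv u0 0 = 0) (h2 : deriv (deriv u0) 0 ≠ 0)
    (f0 : ℝ)
    (hf0def : f0 = (2 * π * ρ)⁻¹ *
      ∫ s in (0:ℝ)..(2 * π * ρ), (ρ * Ω0)⁻¹ * (1 - β + 3 * β * (u0 s) ^ 2))
    (hf0pos : 0 < f0)
    (w11 : ℝ → ℝ) (hw11C : ContDiff ℝ 2 w11)
    (hw11ode : ∀ τ : ℝ,
      deriv (deriv w11) τ + (ρ * Ω0)⁻¹ * (1 - β + 3 * β * (u0 τ) ^ 2) * deriv w11 τ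
        + ((ρ * Ω0)⁻¹ * (6 * β * u0 τ) * deriv u0 τ
          + ((ρ * Ω0)⁻¹) ^ 2 * ((α - β) + 3 * β * (u0 τ) ^ 2)) * w11 τ = 0)
    (hw110 : w11 0 = 1) (hw11d0 : deriv w11 0 = 0) :
    ∃ γ : ℝ, ∃ b : ℝ → ℝ, Continuous b ∧ Function.Periodic b (2 * π * ρ) ∧
      ∀ τ : ℝ, w11 τ = γ * deriv u0 τ + Real.exp (-f0 * τ) * b τ := by
  have hf : ∀ x, HasDerivAt (fun x => (ρ * Ω0)⁻¹ * (1 - β + 3 * β * x ^ 2))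
      ((ρ * Ω0)⁻¹ * (6 * β * x)) x := fun x =>
    ((((hasDerivAt_id x).pow 2).const_mul (3 * β)).const_add (1 - β)).const_mul
      (ρ * Ω0)⁻¹ |>.congr_deriv (by simp only [id]; ring)
  have hg : ∀ x, HasDerivAt (fun x => ((ρ * Ω0)⁻¹) ^ 2 * ((α - β) * x + β * x ^ 3))
      (((ρ * Ω0)⁻¹) ^ 2 * ((α - β) + 3 * β * x ^ 2)) x := fun x =>
    (((hasDerivAt_id x).const_mul (α - β)).add
      (((hasDerivAt_id x).pow 3).const_mul β)).const_mul (((ρ * Ω0)⁻¹) ^ 2)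
      |>.congr_deriv (by simp only [id]; ring)
  have hv := IsLinODESol.deriv_of_lienard hf hg hu0C hode
  have hw := IsLinODESol.of_contDiff_two hw11C hw11ode
  have hint : ∫ s in (0 : ℝ)..(2 * π * ρ), (ρ * Ω0)⁻¹ * (1 - β + 3 * β * (u0 s) ^ 2) ≠ 0 :=
    fun h => hf0pos.ne' (by rw [hf0def, h, mul_zero])
  have hp : Continuous fun τ => (ρ * Ω0)⁻¹ * (1 - β + 3 * β * (u0 τ) ^ 2) := by
    have := hu0C.continuous
    fun_prop
  obtain ⟨γ, b, hb, hbT, hdecomp⟩ := IsLinODESol.exists_floquet_decomposition hp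
    (fun τ => by simp only [hper τ]) (fun τ => by simp only [hper τ, hper.deriv τ])
    hv hper.deriv h1 h2 hw hw110 hw11d0 hint
  exact ⟨γ, b, hb, hbT, hf0def ▸ hdecomp⟩

/-- Floquet decomposition (Lemma 6.3): the solution `w11` of the linearised
equation with `w11(0) = 1`, `ẇ11(0) = 0` splits as
`w11(τ) = γ u̇0(τ) + e^{-f0 τ} b(τ)` with `b` continuous `2πρ`-periodic.
Here `f(u) = (ρΩ0)⁻¹(1 - β + 3βu²)`, `g(u) = (ρΩ0)⁻²((α-β)u + βu³)`, so
`f'(u) = (ρΩ0)⁻¹ 6βu` and `g'(u) = (ρΩ0)⁻²((α-β) + 3βu²)`. -/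
theorem floquet_decomposition
    (ρ Ω0 α β : ℝ) (hρ : 0 < ρ) (hΩ0 : 0 < Ω0) (hβ : 1 < β) (hαβ : β < α)
    (u0 : ℝ → ℝ) (hu0C : ContDiff ℝ 2 u0)
    (hnc : ∃ a b : ℝ, u0 a ≠ u0 b)
    (hper : Function.Periodic u0 (2 * π * ρ))
    (hode : ∀ τ : ℝ,
      deriv (deriv u0) τ + (ρ * Ω0)⁻¹ * (1 - β + 3 * β * (u0 τ) ^ 2) * deriv u0 τ
        + ((ρ * Ω0)⁻¹) ^ 2 * ((α - β) * u0 τ + β * (u0 τ) ^ 3) = 0)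
    (h1 : deriv u0 0 = 0) (h2 : deriv (deriv u0) 0 ≠ 0)
    (f0 : ℝ)
    (hf0def : f0 = (2 * π * ρ)⁻¹ *
      ∫ s in (0:ℝ)..(2 * π * ρ), (ρ * Ω0)⁻¹ * (1 - β + 3 * β * (u0 s) ^ 2))
    (hf0pos : 0 < f0)
    (w11 : ℝ → ℝ) (hw11C : ContDiff ℝ 2 w11)
    (hw11ode : ∀ τ : ℝ,
      deriv (deriv w11) τ + (ρ * Ω0)⁻¹ * (1 - β + 3 * β * (u0 τ) ^ 2) * deriv w11 τ
        + ((ρ * Ω0)⁻¹ * (6 * β * u0 τ) * deriv u0 τ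
          + ((ρ * Ω0)⁻¹) ^ 2 * ((α - β) + 3 * β * (u0 τ) ^ 2)) * w11 τ = 0)
    (hw110 : w11 0 = 1) (hw11d0 : deriv w11 0 = 0) :
    ∃ γ : ℝ, ∃ b : ℝ → ℝ, Continuous b ∧ Function.Periodic b (2 * π * ρ) ∧
      ∀ τ : ℝ, w11 τ = γ * deriv u0 τ + Real.exp (-f0 * τ) * b τ :=
  floquet_decomposition_general ρ Ω0 α β u0 hu0C hper hode h1 h2 f0 hf0def hf0pos w11 hw11C hw11ode
    hw110 hw11d0
end

section
/- Let p, q be coprime positive integers such that p/q is not an even integer, set ρ = p/q, and let K : ℝ → ℂ be a continuous function with period πρ. Then for every τ0 ∈ ℝ, ∫₀^{2πp} K(τ) sin(τ + τ0) dτ = 0 and ∫₀^{2πp} K(τ) cos(τ + τ0) dτ = 0. -/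
/-!
Let `T = πp/q` and `L = 2πp = 2qT`. The functions `τ ↦ K τ * exp (± i τ)` are `L`-periodic, so
their integrals over `[0, L]` are unchanged by the shift `τ ↦ τ + T`; but that shift multiplies the
integrands by `exp (± i T)`, which differs from `1` because `T / 2π = p / 2q` is not an integer.
Hence both integrals vanish, and so do those against `sin (τ + τ0)` and `cos (τ + τ0)`, which are
combinations of them.
-/

open Real
open Complex (exp I)

theorem intervalIntegral_eq_zero_of_periodic_of_add_eq_smul {E : Type*} [NormedAddCommGroup E]
    [NormedSpace ℂ E] {g : ℝ → E} {L T : ℝ} {c : ℂ} (hgL : Function.Periodic g L)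
    (hgT : ∀ τ, g (τ + T) = c • g τ) (hc : c ≠ 1) :
    ∫ τ in (0:ℝ)..L, g τ = 0 := by
  have hfixed : ∫ τ in (0:ℝ)..L, g τ = c • ∫ τ in (0:ℝ)..L, g τ := calc
    ∫ τ in (0:ℝ)..L, g τ = ∫ τ in T..T + L, g τ := by
      simpa using hgL.intervalIntegral_add_eq 0 T
    _ = ∫ τ in (0:ℝ)..L, g (τ + T) := by
      rw [intervalIntegral.integral_comp_add_right, zero_add, add_comm]
    _ = c • ∫ τ in (0:ℝ)..L, g τ := by
      simp only [hgT, intervalIntegral.integral_smul]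
  have : (1 - c) • ∫ τ in (0:ℝ)..L, g τ = 0 := by
    rw [sub_smul, one_smul, ← hfixed, sub_self]
  exact (smul_eq_zero.mp this).resolve_left (sub_ne_zero.mpr hc.symm)

theorem intervalIntegral_mul_exp_eq_zero {K : ℝ → ℂ} {T L : ℝ} (hKT : Function.Periodic K T)
    (hKL : Function.Periodic K L) {z : ℂ} (hzL : exp (z * L) = 1) (hzT : exp (z * T) ≠ 1)
    (s : ℝ) : ∫ τ in (0:ℝ)..L, K τ * exp (z * ↑(τ + s)) = 0 := by
  refine intervalIntegral_eq_zero_of_periodic_of_add_eq_smul (T := T) (c := exp (z * T))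
    (fun τ => ?_) (fun τ => ?_) hzT
  · rw [hKL τ, add_right_comm, Complex.ofReal_add, mul_add, Complex.exp_add, hzL, mul_one]
  · rw [hKT τ, add_right_comm, Complex.ofReal_add, mul_add, Complex.exp_add, smul_eq_mul]
    ring

theorem intervalIntegral_mul_sin_eq_zero {f : ℝ → ℂ} {θ : ℝ → ℝ} {a b : ℝ}
    (hi₁ : IntervalIntegrable (fun τ => f τ * exp (I * θ τ)) MeasureTheory.volume a b)
    (hi₂ : IntervalIntegrable (fun τ => f τ * exp (-I * θ τ)) MeasureTheory.volume a b)
    (h₁ : ∫ τ in a..b, f τ * exp (I * θ τ) = 0) (h₂ : ∫ τ in a..b, f τ * exp (-I * θ τ) = 0) :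
    ∫ τ in a..b, f τ * (Real.sin (θ τ) : ℂ) = 0 := by
  have hsin : ∀ τ, f τ * (Real.sin (θ τ) : ℂ)
      = (f τ * exp (-I * θ τ) - f τ * exp (I * θ τ)) * (I / 2) := fun τ => by
    rw [Complex.ofReal_sin, Complex.sin]; ring_nf
  simp only [hsin, intervalIntegral.integral_mul_const, intervalIntegral.integral_sub hi₂ hi₁,
    h₁, h₂, sub_zero, zero_mul]

theorem intervalIntegral_mul_cos_eq_zero {f : ℝ → ℂ} {θ : ℝ → ℝ} {a b : ℝ}
    (hi₁ : IntervalIntegrable (fun τ => f τ * exp (I * θ τ)) MeasureTheory.volume a b)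
    (hi₂ : IntervalIntegrable (fun τ => f τ * exp (-I * θ τ)) MeasureTheory.volume a b)
    (h₁ : ∫ τ in a..b, f τ * exp (I * θ τ) = 0) (h₂ : ∫ τ in a..b, f τ * exp (-I * θ τ) = 0) :
    ∫ τ in a..b, f τ * (Real.cos (θ τ) : ℂ) = 0 := by
  have hcos : ∀ τ, f τ * (Real.cos (θ τ) : ℂ)
      = (f τ * exp (I * θ τ) + f τ * exp (-I * θ τ)) / 2 := fun τ => by
    rw [Complex.ofReal_cos, Complex.cos]; ring_nf
  simp only [hcos, intervalIntegral.integral_div, intervalIntegral.integral_add hi₁ hi₂,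
    h₁, h₂, add_zero, zero_div]

theorem exp_I_mul_ofReal_eq_one_iff {x : ℝ} : exp (I * x) = 1 ↔ ∃ n : ℤ, x = n * (2 * π) := by
  rw [Complex.exp_eq_one_iff]
  refine exists_congr fun n => ?_
  rw [← mul_assoc, mul_comm I, mul_left_inj' Complex.I_ne_zero]
  exact_mod_cast Iff.rfl

theorem periodic_against_sin_cos_vanishes_general
    (p q : ℕ) (hq : 0 < q)
    (hnoteven : ¬ ∃ m : ℤ, (p : ℝ) / q = 2 * m)
    (K : ℝ → ℂ) (hK : Continuous K)
    (hKper : Function.Periodic K (π * ((p : ℝ) / q))) :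
    ∀ τ0 : ℝ,
      (∫ τ in (0:ℝ)..(2 * π * (p : ℝ)), K τ * (Real.sin (τ + τ0) : ℂ)) = 0 ∧
      (∫ τ in (0:ℝ)..(2 * π * (p : ℝ)), K τ * (Real.cos (τ + τ0) : ℂ)) = 0 := by
  intro τ0
  have hL : ((2 * q : ℕ) : ℝ) * (π * ((p : ℝ) / q)) = 2 * π * p := by
    push_cast
    field_simp
  have hKL : Function.Periodic K (2 * π * p) := hL ▸ hKper.nat_mul (2 * q)
  have hexpL : exp (I * ↑(2 * π * p)) = 1 := by
    rw [exp_I_mul_ofReal_eq_one_iff]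
    exact ⟨p, by push_cast; ring⟩
  have hexpT : exp (I * ↑(π * ((p : ℝ) / q))) ≠ 1 := by
    rw [Ne, exp_I_mul_ofReal_eq_one_iff]
    rintro ⟨n, hn⟩
    exact hnoteven ⟨n, mul_left_cancel₀ Real.pi_ne_zero (by rw [hn]; ring)⟩
  have hexpL' : exp (-I * ↑(2 * π * p)) = 1 := by rw [neg_mul, Complex.exp_neg, hexpL, inv_one]
  have hexpT' : exp (-I * ↑(π * ((p : ℝ) / q))) ≠ 1 := by
    rw [neg_mul, Complex.exp_neg]
    exact inv_ne_one.mpr hexpT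
  have hint : ∀ z : ℂ, IntervalIntegrable (fun τ : ℝ => K τ * exp (z * ↑(τ + τ0)))
      MeasureTheory.volume 0 (2 * π * p) := fun z => by
    apply Continuous.intervalIntegrable
    fun_prop
  have h₁ := intervalIntegral_mul_exp_eq_zero hKper hKL hexpL hexpT τ0
  have h₂ := intervalIntegral_mul_exp_eq_zero hKper hKL hexpL' hexpT' τ0
  exact ⟨intervalIntegral_mul_sin_eq_zero (θ := (· + τ0)) (hint _) (hint _) h₁ h₂,
    intervalIntegral_mul_cos_eq_zero (θ := (· + τ0)) (hint _) (hint _) h₁ h₂⟩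

/-- A continuous function of period `πρ`, `ρ = p/q` with `p/q` not an even
integer, integrates to zero against `sin(τ + τ0)` and `cos(τ + τ0)` over
`[0, 2πp]`. -/
theorem periodic_against_sin_cos_vanishes
    (p q : ℕ) (hp : 0 < p) (hq : 0 < q) (hpq : Nat.Coprime p q)
    (hnoteven : ¬ ∃ m : ℤ, (p : ℝ) / q = 2 * m)
    (K : ℝ → ℂ) (hK : Continuous K)
    (hKper : Function.Periodic K (π * ((p : ℝ) / q))) :
    ∀ τ0 : ℝ,
      (∫ τ in (0:ℝ)..(2 * π * (p : ℝ)), K τ * (Real.sin (τ + τ0) : ℂ)) = 0 ∧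
      (∫ τ in (0:ℝ)..(2 * π * (p : ℝ)), K τ * (Real.cos (τ + τ0) : ℂ)) = 0 :=
  periodic_against_sin_cos_vanishes_general p q hq hnoteven K hK hKper
end
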